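/- arXiv:2102.13106 — 7 statements merged into one kernel-verified Lean document; each statement's English description precedes it below -/
import Mathlib

section
/- Let H be a complex Hilbert space and A, B bounded linear operators on H. If there exists λ > 0 such that ‖A* x‖ ≤ λ ‖B* x‖ for all x ∈ H, then the range of A is contained in the range of B. -/
/-!
Take `y = A u`. The functional `x ↦ ⟪y, x⟫ = ⟪u, A* x⟫` is bounded by `c ‖u‖ ‖B* x‖`, so it factors
through `B*` as a bounded functional on the range of `B*`. Extending it to all of `H` by Hahn–Banach
and representing it by a vector `z` (Riesz) gives `⟪B z, x⟫ = ⟪z, B* x⟫ = ⟪y, x⟫` for all `x`,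
i.e. `y = B z`.
-/

open LinearMap

open scoped InnerProductSpace

namespace LinearMap

variable {R M N P : Type*} [Ring R] [AddCommGroup M] [AddCommGroup N] [AddCommGroup P]
  [Module R M] [Module R N] [Module R P]

noncomputable def rangeLift (T : M →ₗ[R] N) (f : M →ₗ[R] P) (h : ker T ≤ ker f) : range T →ₗ[R] P :=
  (ker T).liftQ f h ∘ₗ T.quotKerEquivRange.symm.toLinearMap

theorem rangeLift_apply (T : M →ₗ[R] N) (f : M →ₗ[R] P) (h : ker T ≤ ker f) (x : M) :
    rangeLift T f h ⟨T x, mem_range_self T x⟩ = f x := by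
  simp only [rangeLift, coe_comp, LinearEquiv.coe_coe, Function.comp_apply,
    quotKerEquivRange_symm_apply_image, Submodule.mkQ_apply, Submodule.liftQ_apply]

end LinearMap

theorem exists_strongDual_comp_eq_of_norm_le {𝕜 E F : Type*} [RCLike 𝕜] [AddCommGroup E]
    [Module 𝕜 E] [NormedAddCommGroup F] [NormedSpace 𝕜 F] (T : E →ₗ[𝕜] F) (f : E →ₗ[𝕜] 𝕜)
    (C : ℝ) (hf : ∀ x, ‖f x‖ ≤ C * ‖T x‖) :
    ∃ g : StrongDual 𝕜 F, ∀ x, g (T x) = f x := by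
  have hker : ker T ≤ ker f := fun x hx ↦ by
    simpa [mem_ker.mp hx] using hf x
  let φ : StrongDual 𝕜 (range T) := (rangeLift T f hker).mkContinuous C <| by
    rintro ⟨_, x, rfl⟩
    rw [rangeLift_apply]; exact hf x
  obtain ⟨g, hg, -⟩ := exists_extension_norm_eq (range T) φ
  exact ⟨g, fun x ↦ (hg ⟨T x, mem_range_self T x⟩).trans (rangeLift_apply T f hker x)⟩

section Adjoint

variable {𝕜 E F G : Type*} [RCLike 𝕜]
  [NormedAddCommGroup E] [InnerProductSpace 𝕜 E] [CompleteSpace E]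
  [NormedAddCommGroup F] [InnerProductSpace 𝕜 F] [CompleteSpace F]
  [NormedAddCommGroup G] [InnerProductSpace 𝕜 G] [CompleteSpace G]

theorem ContinuousLinearMap.mem_range_of_norm_inner_le (B : E →L[𝕜] F) (y : F) (C : ℝ)
    (h : ∀ x, ‖⟪y, x⟫_𝕜‖ ≤ C * ‖B.adjoint x‖) : y ∈ range (B : E →ₗ[𝕜] F) := by
  obtain ⟨g, hg⟩ :=
    exists_strongDual_comp_eq_of_norm_le (B.adjoint : F →ₗ[𝕜] E) (innerSL 𝕜 y : F →L[𝕜] 𝕜) C h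
  refine ⟨(InnerProductSpace.toDual 𝕜 E).symm g, ext_inner_right 𝕜 fun x ↦ ?_⟩
  calc ⟪B ((InnerProductSpace.toDual 𝕜 E).symm g), x⟫_𝕜
      = ⟪(InnerProductSpace.toDual 𝕜 E).symm g, B.adjoint x⟫_𝕜 :=
        (B.adjoint_inner_right _ x).symm
    _ = ⟪y, x⟫_𝕜 := by rw [InnerProductSpace.toDual_symm_apply]; exact hg x

theorem ContinuousLinearMap.range_le_range_of_norm_adjoint_le (A : G →L[𝕜] F) (B : E →L[𝕜] F)
    (C : ℝ) (h : ∀ x, ‖A.adjoint x‖ ≤ C * ‖B.adjoint x‖) :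
    range (A : G →ₗ[𝕜] F) ≤ range (B : E →ₗ[𝕜] F) := by
  rintro _ ⟨u, rfl⟩
  refine B.mem_range_of_norm_inner_le (A u) (C * ‖u‖) fun x ↦ ?_
  calc ‖⟪A u, x⟫_𝕜‖ = ‖⟪u, A.adjoint x⟫_𝕜‖ := by rw [A.adjoint_inner_right]
    _ ≤ ‖u‖ * (C * ‖B.adjoint x‖) := (norm_inner_le_norm _ _).trans (by gcongr; exact h x)
    _ = C * ‖u‖ * ‖B.adjoint x‖ := by ring

end Adjoint

theorem douglas_norm_ineq_implies_range_subset
    {H : Type*} [NormedAddCommGroup H] [InnerProductSpace ℂ H] [CompleteSpace H]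
    (A B : H →L[ℂ] H)
    (h : ∃ c : ℝ, 0 < c ∧ ∀ x : H,
      ‖(ContinuousLinearMap.adjoint A) x‖ ≤ c * ‖(ContinuousLinearMap.adjoint B) x‖) :
    LinearMap.range (A : H →ₗ[ℂ] H) ≤ LinearMap.range (B : H →ₗ[ℂ] H) := by
  obtain ⟨c, -, hc⟩ := h
  exact A.range_le_range_of_norm_adjoint_le B c hc
end

section
/- Let H be a complex Hilbert space and A, B bounded linear operators on H. If the range of A is contained in the range of B, then there exists a bounded operator X with B ∘ X = A and range X ⊆ (ker B)ᗮ. -/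
/-! The restriction of `B` to `(ker B)ᗮ` is injective and has the same range as `B`, since `x` and
`x - P x` (with `P` the projection onto `ker B`) have the same image. So `A` lifts through it: the
lift `X` is linear by injectivity, and bounded by the closed graph theorem, because its graph is
the closed set `{(x, y) | B y = A x}`. -/

open Function

namespace ContinuousLinearMap

section Lift

variable {𝕜 E F G : Type*} [NontriviallyNormedField 𝕜]
  [NormedAddCommGroup E] [NormedSpace 𝕜 E] [CompleteSpace E]
  [NormedAddCommGroup F] [NormedSpace 𝕜 F]
  [NormedAddCommGroup G] [NormedSpace 𝕜 G] [CompleteSpace G]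

theorem exists_comp_eq_of_injective_of_range_le (C : G →L[𝕜] F) (hC : Injective C)
    (A : E →L[𝕜] F) (h : LinearMap.range (A : E →ₗ[𝕜] F) ≤ LinearMap.range (C : G →ₗ[𝕜] F)) :
    ∃ Y : E →L[𝕜] G, C ∘L Y = A := by
  let L : E →ₗ[𝕜] G := (LinearEquiv.ofInjective (C : G →ₗ[𝕜] F) hC).symm.toLinearMap ∘ₗ
    (A : E →ₗ[𝕜] F).codRestrict _ fun x => h ⟨x, rfl⟩
  have hCL : ∀ x, C (L x) = A x := fun x =>
    congrArg Subtype.val ((LinearEquiv.ofInjective _ hC).apply_symm_apply ⟨A x, h ⟨x, rfl⟩⟩)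
  have graph_eq : (L.graph : Set (E × G)) = {p | C p.2 = A p.1} := by
    ext p
    simp only [SetLike.mem_coe, LinearMap.mem_graph_iff, Set.mem_ofPred_eq, ← hCL]
    exact ⟨congrArg C, fun hp => hC hp⟩
  have graph_closed : IsClosed (L.graph : Set (E × G)) :=
    graph_eq ▸ isClosed_eq (by fun_prop) (by fun_prop)
  exact ⟨ofIsClosedGraph graph_closed, ext hCL⟩

end Lift

section OrthogonalKer

variable {𝕜 H F : Type*} [RCLike 𝕜] [NormedAddCommGroup H] [InnerProductSpace 𝕜 H]
  [NormedAddCommGroup F] [NormedSpace 𝕜 F]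

theorem injective_comp_subtypeL_orthogonal_ker (B : H →L[𝕜] F) :
    Injective (B ∘L (LinearMap.ker (B : H →ₗ[𝕜] F))ᗮ.subtypeL) := by
  rw [← coe_coe, ← LinearMap.ker_eq_bot, eq_bot_iff]
  rintro ⟨x, hx⟩ hBx
  have : x ∈ LinearMap.ker (B : H →ₗ[𝕜] F) ⊓ (LinearMap.ker (B : H →ₗ[𝕜] F))ᗮ := ⟨hBx, hx⟩
  rw [Submodule.inf_orthogonal_eq_bot] at this
  simpa using this

theorem range_comp_subtype_orthogonal_ker [CompleteSpace H] (B : H →L[𝕜] F) :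
    LinearMap.range ((B : H →ₗ[𝕜] F) ∘ₗ (LinearMap.ker (B : H →ₗ[𝕜] F))ᗮ.subtype) =
      LinearMap.range (B : H →ₗ[𝕜] F) := by
  refine le_antisymm (LinearMap.range_comp_le_range _ _) ?_
  rintro _ ⟨x, rfl⟩
  let P := (LinearMap.ker (B : H →ₗ[𝕜] F)).starProjection
  refine ⟨⟨x - P x, Submodule.sub_starProjection_mem_orthogonal x⟩, ?_⟩
  have hP : B (P x) = 0 := (LinearMap.ker (B : H →ₗ[𝕜] F)).starProjection_apply_mem x
  simp [hP]

end OrthogonalKer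

end ContinuousLinearMap

open ContinuousLinearMap in
theorem douglas_range_subset_implies_factorization
    {H : Type*} [NormedAddCommGroup H] [InnerProductSpace ℂ H] [CompleteSpace H]
    (A B : H →L[ℂ] H)
    (h : LinearMap.range (A : H →ₗ[ℂ] H) ≤ LinearMap.range (B : H →ₗ[ℂ] H)) :
    ∃ X : H →L[ℂ] H, B ∘L X = A ∧ LinearMap.range (X : H →ₗ[ℂ] H) ≤ (LinearMap.ker (B : H →ₗ[ℂ] H))ᗮ := by
  set K := (LinearMap.ker (B : H →ₗ[ℂ] H))ᗮ
  obtain ⟨Y, hY⟩ := exists_comp_eq_of_injective_of_range_le (B ∘L K.subtypeL)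
    (injective_comp_subtypeL_orthogonal_ker B) A (range_comp_subtype_orthogonal_ker B ▸ h)
  refine ⟨K.subtypeL ∘L Y, hY, ?_⟩
  rintro _ ⟨x, rfl⟩
  exact (Y x).2
end

section
/- Let H be a complex Hilbert space and φ : B(H) → B(H) a bijection preserving the Douglas solution in both directions. Then for every B, range B = H if and only if range φ(B) = H. -/
/-!
Surjectivity of `B` is detected by Douglas solvability. If `B` is onto, then `B` restricted to
`(ker B)ᗮ` is a bijection, hence by the open mapping theorem a topological isomorphism, so every
equation `A = B X` has a solution with `range X ⊆ (ker B)ᗮ`; conversely `A = B X` with `A` onto forces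
`B` onto. A bijection preserving Douglas solutions transports the solvability of `A = B X` to that
of `φ A = φ B Y`, so it suffices to take `A = φ⁻¹ 1` in one direction and `A = 1` in the other.
-/

namespace ContinuousLinearMap

variable {𝕜 E F G : Type*} [RCLike 𝕜] [NormedAddCommGroup E] [InnerProductSpace 𝕜 E]
  [NormedAddCommGroup F] [NormedSpace 𝕜 F] [NormedAddCommGroup G] [NormedSpace 𝕜 G]

def IsDouglasSolution (A : G →L[𝕜] F) (T : E →L[𝕜] F) (X : G →L[𝕜] E) : Prop :=
  A = T ∘L X ∧ LinearMap.range (X : G →ₗ[𝕜] E) ≤ (LinearMap.ker (T : E →ₗ[𝕜] F))ᗮ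

theorem IsDouglasSolution.range_eq_top {A : G →L[𝕜] F} {T : E →L[𝕜] F} {X : G →L[𝕜] E}
    (h : IsDouglasSolution A T X) (hA : LinearMap.range (A : G →ₗ[𝕜] F) = ⊤) :
    LinearMap.range (T : E →ₗ[𝕜] F) = ⊤ :=
  top_unique <| hA ▸ h.1 ▸ LinearMap.range_comp_le_range (X : G →ₗ[𝕜] E) (T : E →ₗ[𝕜] F)

variable [CompleteSpace E] [CompleteSpace F]

theorem exists_isDouglasSolution {T : E →L[𝕜] F} (hT : LinearMap.range (T : E →ₗ[𝕜] F) = ⊤)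
    (A : G →L[𝕜] F) : ∃ X, IsDouglasSolution A T X := by
  set K := (LinearMap.ker (T : E →ₗ[𝕜] F))ᗮ
  have : CompleteSpace (LinearMap.ker (T : E →ₗ[𝕜] F)) := (isClosed_ker T).completeSpace_coe
  have hinj : LinearMap.ker (T ∘L K.subtypeL : K →ₗ[𝕜] F) = ⊥ :=
    Submodule.disjoint_iff_comap_eq_bot.mp (Submodule.orthogonal_disjoint _).symm
  have hsurj : LinearMap.range (T ∘L K.subtypeL : K →ₗ[𝕜] F) = ⊤ := by
    rw [toLinearMap_comp, LinearMap.range_comp, Submodule.toLinearMap_subtypeL,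
      Submodule.range_subtype, LinearMap.map_eq_top_iff hT]
    exact (LinearMap.ker (T : E →ₗ[𝕜] F)).isCompl_orthogonal.symm.sup_eq_top
  let e := ContinuousLinearEquiv.ofBijective (T ∘L K.subtypeL) hinj hsurj
  refine ⟨K.subtypeL ∘L (e.symm : F →L[𝕜] K) ∘L A, ?_, ?_⟩
  · ext v
    exact (e.apply_symm_apply (A v)).symm
  · rintro _ ⟨v, rfl⟩
    exact (e.symm (A v)).2

end ContinuousLinearMap

open ContinuousLinearMap

theorem douglas_preserver_preserves_surjectivity
    {H : Type*} [NormedAddCommGroup H] [InnerProductSpace ℂ H] [CompleteSpace H]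
    (φ : (H →L[ℂ] H) → (H →L[ℂ] H))
    (hbij : Function.Bijective φ)
    (hφ : ∀ A B X : H →L[ℂ] H,
      (A = B ∘L X ∧ LinearMap.range (X : H →ₗ[ℂ] H) ≤ (LinearMap.ker (B : H →ₗ[ℂ] H))ᗮ) ↔
        (φ A = φ B ∘L φ X ∧ LinearMap.range (φ X : H →ₗ[ℂ] H) ≤ (LinearMap.ker (φ B : H →ₗ[ℂ] H))ᗮ)) :
    ∀ B : H →L[ℂ] H, LinearMap.range (B : H →ₗ[ℂ] H) = ⊤ ↔ LinearMap.range (φ B : H →ₗ[ℂ] H) = ⊤ := by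
  have transfer (A B : H →L[ℂ] H) :
      (∃ X, IsDouglasSolution A B X) ↔ ∃ Y, IsDouglasSolution (φ A) (φ B) Y :=
    ⟨fun ⟨X, hX⟩ ↦ ⟨φ X, (hφ A B X).1 hX⟩,
      fun ⟨Y, hY⟩ ↦ by obtain ⟨X, rfl⟩ := hbij.2 Y; exact ⟨X, (hφ A B X).2 hY⟩⟩
  have range_one : LinearMap.range ((1 : H →L[ℂ] H) : H →ₗ[ℂ] H) = ⊤ := LinearMap.range_id
  intro B
  constructor
  · intro hB
    obtain ⟨A, hA⟩ := hbij.2 1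
    obtain ⟨Y, hY⟩ := (transfer A B).1 (exists_isDouglasSolution hB A)
    exact hY.range_eq_top (hA ▸ range_one)
  · intro hB
    obtain ⟨X, hX⟩ := (transfer 1 B).2 (exists_isDouglasSolution hB (φ 1))
    exact hX.range_eq_top range_one
end

section
/- Let H be a complex Hilbert space and φ : B(H) → B(H) a bijection preserving the Douglas solution in both directions. Then for every B, ker B = {0} if and only if ker φ(B) = {0}. -/
/- B is injective iff (ker B)ᗮ = H, i.e. iff X is a Douglas solution of B X = B ∘ X for every X
(test with X = id). Since φ is onto, every operator is some φ X and every φ B ∘ φ X is some φ A, so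
the preservation property carries this characterisation from B to φ B and back. -/

section

variable {𝕜 E : Type*} [RCLike 𝕜] [NormedAddCommGroup E] [InnerProductSpace 𝕜 E]

def IsDouglasSolution (A B X : E →L[𝕜] E) : Prop :=
  A = B ∘L X ∧ LinearMap.range (X : E →ₗ[𝕜] E) ≤ (LinearMap.ker (B : E →ₗ[𝕜] E))ᗮ

theorem ker_eq_bot_iff_forall_isDouglasSolution_comp (B : E →L[𝕜] E) :
    LinearMap.ker (B : E →ₗ[𝕜] E) = ⊥ ↔ ∀ X : E →L[𝕜] E, IsDouglasSolution (B ∘L X) B X := by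
  rw [← Submodule.orthogonal_eq_top_iff, eq_top_iff]
  refine ⟨fun h X => ⟨rfl, le_top.trans h⟩, fun h => ?_⟩
  simpa [← LinearMap.range_id] using (h (ContinuousLinearMap.id 𝕜 E)).2

theorem forall_isDouglasSolution_comp_map_iff {φ : (E →L[𝕜] E) → (E →L[𝕜] E)}
    (hsurj : Function.Surjective φ)
    (hφ : ∀ A B X, IsDouglasSolution A B X ↔ IsDouglasSolution (φ A) (φ B) (φ X))
    (B : E →L[𝕜] E) :
    (∀ X, IsDouglasSolution (B ∘L X) B X) ↔ ∀ Y, IsDouglasSolution (φ B ∘L Y) (φ B) Y := by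
  refine ⟨fun h Y => ?_, fun h X => ?_⟩
  · obtain ⟨X, rfl⟩ := hsurj Y
    exact ⟨rfl, ((hφ _ B X).mp (h X)).2⟩
  · obtain ⟨A, hA⟩ := hsurj (φ B ∘L φ X)
    exact ⟨rfl, ((hφ A B X).mpr ⟨hA, (h (φ X)).2⟩).2⟩
end

theorem douglas_preserver_preserves_injectivity_general
    {H : Type*} [NormedAddCommGroup H] [InnerProductSpace ℂ H]
    (φ : (H →L[ℂ] H) → (H →L[ℂ] H))
    (hbij : Function.Bijective φ)
    (hφ : ∀ A B X : H →L[ℂ] H,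
      (A = B ∘L X ∧ LinearMap.range (X : H →ₗ[ℂ] H) ≤ (LinearMap.ker (B : H →ₗ[ℂ] H))ᗮ) ↔
        (φ A = φ B ∘L φ X ∧ LinearMap.range (φ X : H →ₗ[ℂ] H) ≤ (LinearMap.ker (φ B : H →ₗ[ℂ] H))ᗮ)) :
    ∀ B : H →L[ℂ] H, LinearMap.ker (B : H →ₗ[ℂ] H) = ⊥ ↔ LinearMap.ker (φ B : H →ₗ[ℂ] H) = ⊥ := by
  intro B
  rw [ker_eq_bot_iff_forall_isDouglasSolution_comp, ker_eq_bot_iff_forall_isDouglasSolution_comp]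
  exact forall_isDouglasSolution_comp_map_iff hbij.surjective hφ B

theorem douglas_preserver_preserves_injectivity
    {H : Type*} [NormedAddCommGroup H] [InnerProductSpace ℂ H] [CompleteSpace H]
    (φ : (H →L[ℂ] H) → (H →L[ℂ] H))
    (hbij : Function.Bijective φ)
    (hφ : ∀ A B X : H →L[ℂ] H,
      (A = B ∘L X ∧ LinearMap.range (X : H →ₗ[ℂ] H) ≤ (LinearMap.ker (B : H →ₗ[ℂ] H))ᗮ) ↔
        (φ A = φ B ∘L φ X ∧ LinearMap.range (φ X : H →ₗ[ℂ] H) ≤ (LinearMap.ker (φ B : H →ₗ[ℂ] H))ᗮ)) :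
    ∀ B : H →L[ℂ] H, LinearMap.ker (B : H →ₗ[ℂ] H) = ⊥ ↔ LinearMap.ker (φ B : H →ₗ[ℂ] H) = ⊥ :=
  douglas_preserver_preserves_injectivity_general φ hbij hφ
end

section
/- Let H be a complex Hilbert space and φ : B(H) → B(H) a bijection preserving the Douglas solution in both directions. If P is an orthogonal projection, then φ(P) is an orthogonal projection. -/
/-!
An idempotent `P` is self-adjoint exactly when its range is orthogonal to its kernel. Hence `P` is
an orthogonal projection iff `X = P` is the Douglas solution of `P = P X`, a property of the triple
`(P, P, P)` that `φ` transfers to `(φ P, φ P, φ P)`.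
-/

namespace ContinuousLinearMap

variable {𝕜 E : Type*} [RCLike 𝕜] [NormedAddCommGroup E] [InnerProductSpace 𝕜 E] [CompleteSpace E]

theorem adjoint_eq_self_iff_range_le_orthogonal_ker {Q : E →L[𝕜] E}
    (hQ : IsIdempotentElem Q) :
    adjoint Q = Q ↔ LinearMap.range (Q : E →ₗ[𝕜] E) ≤ (LinearMap.ker (Q : E →ₗ[𝕜] E))ᗮ := by
  rw [← isSelfAdjoint_iff', isSelfAdjoint_iff_isSymmetric,
    LinearMap.IsIdempotentElem.isSymmetric_iff_isOrtho_range_ker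
      (isIdempotentElem_toLinearMap_iff.mpr hQ),
    Submodule.isOrtho_iff_le]

theorem isOrthogonalProjection_iff_douglas_self (P : E →L[𝕜] E) :
    (P ∘L P = P ∧ adjoint P = P) ↔
      (P = P ∘L P ∧ LinearMap.range (P : E →ₗ[𝕜] E) ≤ (LinearMap.ker (P : E →ₗ[𝕜] E))ᗮ) := by
  constructor
  · rintro ⟨hidem, hadj⟩
    exact ⟨hidem.symm, (adjoint_eq_self_iff_range_le_orthogonal_ker hidem).mp hadj⟩
  · rintro ⟨hidem, hrange⟩
    exact ⟨hidem.symm, (adjoint_eq_self_iff_range_le_orthogonal_ker hidem.symm).mpr hrange⟩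

end ContinuousLinearMap

theorem douglas_preserver_preserves_projections_general
    {H : Type*} [NormedAddCommGroup H] [InnerProductSpace ℂ H] [CompleteSpace H]
    (φ : (H →L[ℂ] H) → (H →L[ℂ] H))
    (hφ : ∀ A B X : H →L[ℂ] H,
      (A = B ∘L X ∧ LinearMap.range (X : H →ₗ[ℂ] H) ≤ (LinearMap.ker (B : H →ₗ[ℂ] H))ᗮ) ↔
        (φ A = φ B ∘L φ X ∧ LinearMap.range (φ X : H →ₗ[ℂ] H) ≤ (LinearMap.ker (φ B : H →ₗ[ℂ] H))ᗮ)) :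
    ∀ P : H →L[ℂ] H, (P ∘L P = P ∧ ContinuousLinearMap.adjoint P = P) →
      (φ P ∘L φ P = φ P ∧ ContinuousLinearMap.adjoint (φ P) = φ P) := fun P hP =>
  (ContinuousLinearMap.isOrthogonalProjection_iff_douglas_self (φ P)).mpr
    ((hφ P P P).mp ((ContinuousLinearMap.isOrthogonalProjection_iff_douglas_self P).mp hP))

theorem douglas_preserver_preserves_projections
    {H : Type*} [NormedAddCommGroup H] [InnerProductSpace ℂ H] [CompleteSpace H]
    (φ : (H →L[ℂ] H) → (H →L[ℂ] H))
    (hbij : Function.Bijective φ)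
    (hφ : ∀ A B X : H →L[ℂ] H,
      (A = B ∘L X ∧ LinearMap.range (X : H →ₗ[ℂ] H) ≤ (LinearMap.ker (B : H →ₗ[ℂ] H))ᗮ) ↔
        (φ A = φ B ∘L φ X ∧ LinearMap.range (φ X : H →ₗ[ℂ] H) ≤ (LinearMap.ker (φ B : H →ₗ[ℂ] H))ᗮ)) :
    ∀ P : H →L[ℂ] H, (P ∘L P = P ∧ ContinuousLinearMap.adjoint P = P) →
      (φ P ∘L φ P = φ P ∧ ContinuousLinearMap.adjoint (φ P) = φ P) :=
  douglas_preserver_preserves_projections_general φ hφ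
end

section
/- Let H be a complex Hilbert space and R a bounded invertible operator such that for every invertible X ∈ B(H) there is a scalar λ_X ∈ ℂ with R X = λ_X X R. Then R is a scalar multiple of the identity. -/
theorem commutant_up_to_scalar_is_scalar
    {H : Type*} [NormedAddCommGroup H] [InnerProductSpace ℂ H] [CompleteSpace H]
    (R : H →L[ℂ] H) (hR : IsUnit R)
    (h : ∀ X : H →L[ℂ] H, IsUnit X → ∃ l : ℂ, R ∘L X = l • (X ∘L R)) :
    ∃ c : ℂ, R = c • (1 : H →L[ℂ] H) := by
  by_cases hH : Subsingleton H
  · exact ⟨0, by ext x; exact Subsingleton.elim _ _⟩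
  have : Nontrivial H := not_subsingleton_iff_nontrivial.mp hH
  have hRne : R ≠ 0 := hR.ne_zero
  -- Step 1: R commutes with every operator of norm < 1
  have comm_small : ∀ a : H →L[ℂ] H, ‖a‖ < 1 → R * a = a * R := by
    intro a ha
    have h1 : IsUnit (1 + a) := by
      have := (Units.oneSub (-a) (by simpa using ha)).isUnit
      simpa [sub_neg_eq_add] using this
    have h2 : IsUnit (1 - a) := (Units.oneSub a ha).isUnit
    obtain ⟨l, hl⟩ := h (1 + a) h1
    obtain ⟨m, hm⟩ := h (1 - a) h2
    rw [ContinuousLinearMap.mul_def] at *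
    have hl' : R + R ∘L a = l • R + l • (a ∘L R) := by
      rw [ContinuousLinearMap.comp_add, ContinuousLinearMap.add_comp] at hl
      simpa [smul_add, ContinuousLinearMap.one_def] using hl
    have hm' : R - R ∘L a = m • R - m • (a ∘L R) := by
      rw [ContinuousLinearMap.comp_sub, ContinuousLinearMap.sub_comp] at hm
      simpa [smul_sub, ContinuousLinearMap.one_def] using hm
    have key : (2 - l - m) • R = (l - m) • (a ∘L R) := by
      have := congrArg₂ (· + ·) hl' hm'
      linear_combination (norm := module) this
    by_cases hlm : l = m
    · subst hlm
      have h2l : (2 - 2 * l) • R = 0 := by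
        rw [show (2 - 2*l) = (2 - l - l) by ring]
        simpa using key
      have hl1 : l = 1 := by
        rcases smul_eq_zero.mp h2l with hc | hc
        · linear_combination (-1/2 : ℂ) * hc
        · exact absurd hc hRne
      subst hl1
      have := hl'
      simp only [one_smul] at this
      linear_combination (norm := module) this
    · -- a ∘L R = c • R, hence a is scalar
      set c : ℂ := (l - m)⁻¹ * (2 - l - m) with hc
      have hne : l - m ≠ 0 := sub_ne_zero.mpr hlm
      have haR : a ∘L R = c • R := by
        have : c • R = a ∘L R := by
          rw [hc, mul_smul, key, smul_smul, inv_mul_cancel₀ hne, one_smul]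
        exact this.symm
      have haRmul : a * R = (c • (1 : H →L[ℂ] H)) * R := by
        rw [smul_mul_assoc, one_mul, ContinuousLinearMap.mul_def]; exact haR
      have ha' : a = c • (1 : H →L[ℂ] H) := hR.mul_right_cancel haRmul
      rw [ha']
      ext y
      simp
  -- Step 2: R commutes with everything
  have comm : ∀ a : H →L[ℂ] H, R * a = a * R := by
    intro a
    have hpos : (0 : ℝ) < ‖a‖ + 1 := by positivity
    set t : ℂ := ((‖a‖ + 1 : ℝ) : ℂ) with ht
    have htne : t ≠ 0 := Complex.ofReal_ne_zero.mpr (ne_of_gt hpos)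
    have hb : ‖t⁻¹ • a‖ < 1 := by
      rw [norm_smul]
      have : ‖t⁻¹‖ = (‖a‖ + 1)⁻¹ := by
        rw [norm_inv, ht, Complex.norm_real, Real.norm_of_nonneg (le_of_lt hpos)]
      rw [this]
      rw [inv_mul_lt_iff₀ hpos]
      linarith
    have := comm_small (t⁻¹ • a) hb
    have h2 : t • (R * t⁻¹ • a) = t • (t⁻¹ • a * R) := congrArg (t • ·) this
    simpa [mul_smul_comm, smul_mul_assoc, smul_smul, mul_inv_cancel₀ htne] using h2
  -- Step 3: from commuting with rank-one operators, R is scalar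
  obtain ⟨x, hx0⟩ := exists_ne (0 : H)
  have hxx : (inner ℂ x x : ℂ) ≠ 0 := inner_self_ne_zero.mpr hx0
  refine ⟨(inner ℂ x x)⁻¹ * inner ℂ x (R x), ?_⟩
  ext y
  have hc := comm ((innerSL ℂ x).smulRight y)
  have := congrArg (fun f : H →L[ℂ] H => f x) hc
  simp only [ContinuousLinearMap.mul_apply, ContinuousLinearMap.smulRight_apply,
    innerSL_apply_apply, map_smul] at this
  -- this : (⟪x,x⟫) • R y = ⟪x, R x⟫ • y  (roughly)
  have key : (inner ℂ x x : ℂ) • R y = (inner ℂ x (R x) : ℂ) • y := this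
  have := congrArg (fun v => (inner ℂ x x : ℂ)⁻¹ • v) key
  simp only [smul_smul, inv_mul_cancel₀ hxx, one_smul] at this
  simpa [smul_smul, inv_mul_cancel₀ hxx, one_smul,
    ContinuousLinearMap.smul_apply, ContinuousLinearMap.one_apply] using this
end

section
/- Let H be a complex Hilbert space and T : H → H a linear bijection such that x ⊥ y implies T x ⊥ T y for all x, y ∈ H, and such that ‖T e‖ = ‖T f‖ for all orthonormal pairs e, f. Then some nonzero scalar multiple of T is unitary. -/
/-!
Rotating `v` by a unimodular scalar makes `⟪u, v⟫` real, and then `u + v ⊥ u - v` as soon as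
`‖u‖ = ‖v‖`. Since the real part of `⟪T (u + v), T (u - v)⟫` is `‖T u‖² - ‖T v‖²`, an
orthogonality preserving linear map sends vectors of equal norm to vectors of equal norm, so it
multiplies all norms by one constant, which is nonzero when the map is injective.
-/

open RCLike
open scoped InnerProductSpace ComplexConjugate

section

variable {𝕜 E F : Type*} [RCLike 𝕜] [NormedAddCommGroup E] [InnerProductSpace 𝕜 E]
  [NormedAddCommGroup F] [InnerProductSpace 𝕜 F]

theorem RCLike.exists_norm_eq_one_mul_eq_norm (a : 𝕜) : ∃ c : 𝕜, ‖c‖ = 1 ∧ c * a = ‖a‖ := by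
  rcases eq_or_ne a 0 with rfl | ha
  · exact ⟨1, norm_one, by simp⟩
  have hna : (‖a‖ : 𝕜) ≠ 0 := ofReal_ne_zero.mpr (norm_ne_zero_iff.mpr ha)
  refine ⟨conj a / ‖a‖, ?_, ?_⟩
  · rw [norm_div, norm_conj, norm_ofReal, abs_norm, div_self (norm_ne_zero_iff.mpr ha)]
  · rw [div_mul_eq_mul_div, conj_mul, pow_two, mul_div_assoc, div_self hna, mul_one]

theorem re_inner_add_sub (x y : E) : re ⟪x + y, x - y⟫_𝕜 = ‖x‖ ^ 2 - ‖y‖ ^ 2 := by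
  simp only [inner_add_left, inner_sub_right, map_add, map_sub, inner_re_symm (𝕜 := 𝕜) y x,
    inner_self_eq_norm_sq (𝕜 := 𝕜)]
  ring

theorem inner_add_sub_eq_zero_of_norm_eq {x y : E} (hnorm : ‖x‖ = ‖y‖)
    (hsymm : ⟪y, x⟫_𝕜 = ⟪x, y⟫_𝕜) : ⟪x + y, x - y⟫_𝕜 = 0 := by
  simp only [inner_add_left, inner_sub_right, hsymm, inner_self_eq_norm_sq_to_K, hnorm]
  ring

section OrthogonalityPreserving

variable {T : E →ₗ[𝕜] F} (hT : ∀ x y : E, ⟪x, y⟫_𝕜 = 0 → ⟪T x, T y⟫_𝕜 = 0)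
include hT

theorem norm_map_eq_of_norm_eq_of_preserves_orthogonality {u v : E} (huv : ‖u‖ = ‖v‖) :
    ‖T u‖ = ‖T v‖ := by
  obtain ⟨c, hc, hca⟩ := exists_norm_eq_one_mul_eq_norm ⟪u, v⟫_𝕜
  have hreal : ⟪u, c • v⟫_𝕜 = ‖⟪u, v⟫_𝕜‖ := by rw [inner_smul_right, hca]
  have horth : ⟪u + c • v, u - c • v⟫_𝕜 = 0 := by
    refine inner_add_sub_eq_zero_of_norm_eq (by rw [norm_smul, hc, one_mul, huv]) ?_
    rw [← inner_conj_symm, hreal, conj_ofReal]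
  have hsq : ‖T u‖ ^ 2 = ‖T (c • v)‖ ^ 2 := by
    rw [← sub_eq_zero, ← re_inner_add_sub (𝕜 := 𝕜), ← map_add, ← map_sub, hT _ _ horth, map_zero]
  rw [pow_left_inj₀ (norm_nonneg _) (norm_nonneg _) two_ne_zero] at hsq
  rw [hsq, map_smul, norm_smul, hc, one_mul]

theorem norm_map_mul_norm_eq_of_preserves_orthogonality (x y : E) : ‖T x‖ * ‖y‖ = ‖T y‖ * ‖x‖ := by
  have key := norm_map_eq_of_norm_eq_of_preserves_orthogonality hT
    (u := ((‖y‖ : ℝ) : 𝕜) • x) (v := ((‖x‖ : ℝ) : 𝕜) • y)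
    (by simp only [norm_smul, norm_ofReal, abs_norm, mul_comm])
  simpa only [map_smul, norm_smul, norm_ofReal, abs_norm, mul_comm] using key

end OrthogonalityPreserving

end

theorem orthogonality_preserving_bijection_scalar_multiple_unitary_general
    {H : Type*} [NormedAddCommGroup H] [InnerProductSpace ℂ H]
    (T : H →ₗ[ℂ] H) (hbij : Function.Bijective T)
    (horth : ∀ x y : H, (inner ℂ x y : ℂ) = 0 → (inner ℂ (T x) (T y) : ℂ) = 0) :
    ∃ c : ℂ, c ≠ 0 ∧ ∀ x : H, ‖c • T x‖ = ‖x‖ := by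
  rcases subsingleton_or_nontrivial H with hH | hH
  · exact ⟨1, one_ne_zero, fun x => by rw [Subsingleton.elim x 0, map_zero, smul_zero]⟩
  obtain ⟨e, he⟩ := exists_ne (0 : H)
  have hTe : ‖T e‖ ≠ 0 := norm_ne_zero_iff.mpr ((map_ne_zero_iff T hbij.injective).mpr he)
  refine ⟨((‖e‖ / ‖T e‖ : ℝ) : ℂ), by simpa [hTe] using he, fun x => ?_⟩
  rw [norm_smul, Complex.norm_real, Real.norm_of_nonneg (by positivity), div_mul_eq_mul_div,
    mul_comm, norm_map_mul_norm_eq_of_preserves_orthogonality horth x e, mul_div_cancel_left₀ _ hTe]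

theorem orthogonality_preserving_bijection_scalar_multiple_unitary
    {H : Type*} [NormedAddCommGroup H] [InnerProductSpace ℂ H] [CompleteSpace H]
    (hdim : 2 ≤ Module.rank ℂ H)
    (T : H →ₗ[ℂ] H) (hbij : Function.Bijective T)
    (horth : ∀ x y : H, (inner ℂ x y : ℂ) = 0 → (inner ℂ (T x) (T y) : ℂ) = 0)
    (hnorm : ∀ e f : H, ‖e‖ = 1 → ‖f‖ = 1 → (inner ℂ e f : ℂ) = 0 → ‖T e‖ = ‖T f‖) :
    ∃ c : ℂ, c ≠ 0 ∧ ∀ x : H, ‖c • T x‖ = ‖x‖ :=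
  orthogonality_preserving_bijection_scalar_multiple_unitary_general T hbij horth
end
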